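/- With μ₁, μ₂, σ₁, σ₂, ψ and K_C as in the context, there exists a constant A > 0, depending only on s₁, s₂, ε₁, ε₂, such that for every real C ≥ 2 and all x, z ∈ ℝ∖{0}: |K_C(x,z)| ≤ A · |z|^{1−σ₂} · |x|^{1−σ₁} · ( (1+|x|)/|z| + (1+|z|)/|x| ). -/

import Mathlib

open MeasureTheory Real

noncomputable section

/-- The quasi-character `μ(t) = sgn(t)^ε · |t|^s` of `ℝ∖{0}`. -/
def muR (ε : ℕ) (s : ℂ) (t : ℝ) : ℂ :=
  ((Real.sign t : ℝ) : ℂ) ^ ε * Complex.exp (s * Real.log |t|)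

/-- The truncated GL(2) Voronoi–Hankel kernel (real case):
`K_C(x,z) = μ₂(z)⁻¹|z| μ₁(x)⁻¹|x| ∫_{C⁻¹ ≤ |y| ≤ C} ψ(x/y + yz) μ₁(y)μ₂(y)⁻¹ |y|⁻¹ dy`
with `ψ(t) = e^{2πit}`. -/
def KcR (ε₁ ε₂ : ℕ) (s₁ s₂ : ℂ) (C x z : ℝ) : ℂ :=
  (muR ε₂ s₂ z)⁻¹ * ((|z| : ℝ) : ℂ) * ((muR ε₁ s₁ x)⁻¹ * ((|x| : ℝ) : ℂ)) *
    ∫ y in {y : ℝ | C⁻¹ ≤ |y| ∧ |y| ≤ C},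
      Complex.exp (2 * (π : ℂ) * Complex.I * ((x / y + y * z : ℝ) : ℂ)) *
        (muR ε₁ s₁ y * (muR ε₂ s₂ y)⁻¹) * ((|y|⁻¹ : ℝ) : ℂ)


namespace KernelAux

def tp : ℂ := 2 * (π : ℂ) * Complex.I

def EE (w : ℂ) (y : ℝ) : ℂ := Complex.exp (w * Real.log y)

def ph (x z y : ℝ) : ℂ := Complex.exp (tp * ((x / y + y * z : ℝ) : ℂ))

lemma tp_ne : tp ≠ 0 := by
  rw [tp]
  simp [Real.pi_ne_zero, Complex.I_ne_zero, Complex.ofReal_ne_zero]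

lemma norm_tp : ‖tp‖ = 2 * π := by
  rw [tp]
  simp [Complex.norm_I, abs_of_pos Real.pi_pos]

lemma norm_exp_phase (t : ℝ) : ‖Complex.exp (tp * (t : ℂ))‖ = 1 := by
  have h : tp * (t : ℂ) = ((2 * π * t : ℝ) : ℂ) * Complex.I := by
    rw [tp]; push_cast; ring
  rw [h, Complex.norm_exp_ofReal_mul_I]

lemma norm_EE {w : ℂ} {y : ℝ} (hy : 0 < y) : ‖EE w y‖ = y ^ w.re := by
  rw [EE, Complex.norm_exp, Real.rpow_def_of_pos hy]
  congr 1
  simp [Complex.mul_re]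
  ring

lemma hasDerivAt_EE (w : ℂ) {y : ℝ} (hy : y ≠ 0) :
    HasDerivAt (EE w) (EE w y * (w * (y : ℂ)⁻¹)) y := by
  have h1 : HasDerivAt (fun t : ℝ => ((Real.log t : ℝ) : ℂ)) ((y⁻¹ : ℝ) : ℂ) y :=
    (Real.hasDerivAt_log hy).ofReal_comp
  have h2 := (h1.const_mul w).cexp
  rw [show EE w = fun t : ℝ => Complex.exp (w * Real.log t) from rfl]
  simpa [EE, mul_comm] using h2

lemma hasDerivAt_phx (x : ℝ) {y : ℝ} (hy : y ≠ 0) :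
    HasDerivAt (fun t : ℝ => Complex.exp (tp * ((x / t : ℝ) : ℂ)))
      (Complex.exp (tp * ((x / y : ℝ) : ℂ)) * (tp * ((-(x / y ^ 2) : ℝ) : ℂ))) y := by
  have h0 : HasDerivAt (fun t : ℝ => x / t) (-(x / y ^ 2)) y := by
    have := (hasDerivAt_inv hy).const_mul x
    simpa [div_eq_mul_inv, neg_mul, mul_comm] using this
  have h1 := (h0.ofReal_comp.const_mul tp).cexp
  simpa using h1

lemma hasDerivAt_phz (z : ℝ) (y : ℝ) :
    HasDerivAt (fun t : ℝ => Complex.exp (tp * ((t * z : ℝ) : ℂ)))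
      (Complex.exp (tp * ((y * z : ℝ) : ℂ)) * (tp * ((z : ℝ) : ℂ))) y := by
  have h0 : HasDerivAt (fun t : ℝ => t * z) z y := by
    simpa using (hasDerivAt_id y).mul_const z
  have h1 := (h0.ofReal_comp.const_mul tp).cexp
  simpa using h1

lemma contOn_EE (w : ℂ) {s : Set ℝ} (hs : ∀ y ∈ s, y ≠ 0) : ContinuousOn (EE w) s := by
  apply Complex.continuous_exp.comp_continuousOn
  exact continuousOn_const.mul (Complex.continuous_ofReal.comp_continuousOn
    (Real.continuousOn_log.mono (by intro y hy; simpa using hs y hy)))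

lemma contOn_phx (x : ℝ) {s : Set ℝ} (hs : ∀ y ∈ s, y ≠ 0) :
    ContinuousOn (fun t : ℝ => Complex.exp (tp * ((x / t : ℝ) : ℂ))) s := by
  apply Complex.continuous_exp.comp_continuousOn
  exact continuousOn_const.mul (Complex.continuous_ofReal.comp_continuousOn
    (continuousOn_const.div continuousOn_id hs))

lemma cont_phz (z : ℝ) : Continuous (fun t : ℝ => Complex.exp (tp * ((t * z : ℝ) : ℂ))) := by
  apply Complex.continuous_exp.comp
  exact continuous_const.mul (Complex.continuous_ofReal.comp ((continuous_id).mul continuous_const))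

lemma contOn_ph (x z : ℝ) {s : Set ℝ} (hs : ∀ y ∈ s, y ≠ 0) :
    ContinuousOn (fun y => ph x z y) s := by
  apply Complex.continuous_exp.comp_continuousOn
  apply continuousOn_const.mul
  apply Complex.continuous_ofReal.comp_continuousOn
  exact (continuousOn_const.div continuousOn_id hs).add (continuousOn_id.mul continuousOn_const)

lemma contOn_inv_c {s : Set ℝ} (hs : ∀ y ∈ s, y ≠ 0) :
    ContinuousOn (fun y : ℝ => ((y : ℂ))⁻¹) s := by
  apply ContinuousOn.inv₀ (Complex.continuous_ofReal.continuousOn)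
  intro y hy; exact_mod_cast hs y hy

lemma lemA {w : ℂ} (hw : w.re < 0) {b x z : ℝ} (hb : 1 ≤ b) (hz : z ≠ 0) :
    ‖∫ y in (1:ℝ)..b, ph x z y * EE w y‖ ≤
      (2 + (2 * π * |x| + ‖w‖) / (-w.re)) / (2 * π * |z|) := by
  have hπ := Real.pi_pos
  have habsz : (0:ℝ) < |z| := abs_pos.mpr hz
  have hIcc : Set.uIcc (1:ℝ) b = Set.Icc 1 b := Set.uIcc_of_le hb
  have hne : ∀ y ∈ Set.uIcc (1:ℝ) b, y ≠ 0 := by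
    intro y hy; rw [hIcc] at hy; have := hy.1; intro h; rw [h] at this; linarith
  set u : ℝ → ℂ := fun y => Complex.exp (tp * ((x / y : ℝ) : ℂ)) * EE w y with hu_def
  set u' : ℝ → ℂ := fun y =>
    Complex.exp (tp * ((x / y : ℝ) : ℂ)) * (tp * ((-(x / y ^ 2) : ℝ) : ℂ)) * EE w y +
      Complex.exp (tp * ((x / y : ℝ) : ℂ)) * (EE w y * (w * (y : ℂ)⁻¹)) with hu'_def
  set v : ℝ → ℂ := fun y => Complex.exp (tp * ((y * z : ℝ) : ℂ)) / (tp * (z : ℂ)) with hv_def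
  set v' : ℝ → ℂ := fun y => Complex.exp (tp * ((y * z : ℝ) : ℂ)) with hv'_def
  have htpz : tp * (z : ℂ) ≠ 0 := mul_ne_zero tp_ne (by exact_mod_cast hz)
  have hu : ∀ y ∈ Set.uIcc (1:ℝ) b, HasDerivAt u (u' y) y := fun y hy =>
    (hasDerivAt_phx x (hne y hy)).mul (hasDerivAt_EE w (hne y hy))
  have hv : ∀ y ∈ Set.uIcc (1:ℝ) b, HasDerivAt v (v' y) y := by
    intro y _
    have h := (hasDerivAt_phz z y).div_const (tp * (z : ℂ))
    simpa [hv_def, hv'_def, mul_div_assoc, mul_div_cancel_right₀ _ htpz] using h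
  have hu'int : IntervalIntegrable u' volume 1 b := by
    apply ContinuousOn.intervalIntegrable
    refine ContinuousOn.add (ContinuousOn.mul (ContinuousOn.mul (contOn_phx x hne) ?_) (contOn_EE w hne))
      (ContinuousOn.mul (contOn_phx x hne) ((contOn_EE w hne).mul (continuousOn_const.mul (contOn_inv_c hne))))
    exact continuousOn_const.mul (Complex.continuous_ofReal.comp_continuousOn
      ((continuousOn_const.div (continuousOn_id.pow 2) (fun y hy => pow_ne_zero 2 (hne y hy))).neg))
  have hv'int : IntervalIntegrable v' volume 1 b := ((cont_phz z).continuousOn).intervalIntegrable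
  have key : ∫ y in (1:ℝ)..b, u y * v' y = u b * v b - u 1 * v 1 - ∫ y in (1:ℝ)..b, u' y * v y :=
    intervalIntegral.integral_mul_deriv_eq_deriv_mul hu hv hu'int hv'int
  have hEq : Set.EqOn (fun y => ph x z y * EE w y) (fun y => u y * v' y) (Set.uIcc (1:ℝ) b) := by
    intro y _
    simp only [hu_def, hv'_def, ph]
    rw [show tp * ((x / y + y * z : ℝ) : ℂ) = tp * ((x/y : ℝ) : ℂ) + tp * ((y*z : ℝ) : ℂ) by
      push_cast; ring, Complex.exp_add]
    ring
  rw [intervalIntegral.integral_congr hEq, key]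
  -- norms
  have hnv : ∀ y : ℝ, ‖v y‖ = 1 / (2 * π * |z|) := by
    intro y
    rw [hv_def]
    simp only
    rw [norm_div, norm_exp_phase, norm_mul, norm_tp, Complex.norm_real, Real.norm_eq_abs]
  have hnu : ∀ y : ℝ, 0 < y → ‖u y‖ = y ^ w.re := by
    intro y hy
    rw [hu_def]
    simp only
    rw [norm_mul, norm_exp_phase, one_mul, norm_EE hy]
  have hb0 : (0:ℝ) < b := lt_of_lt_of_le one_pos hb
  have hvpos : (0:ℝ) < 1 / (2 * π * |z|) := by positivity
  have hub : ‖u b * v b‖ ≤ 1 / (2 * π * |z|) := by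
    rw [norm_mul, hnu b hb0, hnv]
    have h1 : b ^ w.re ≤ 1 := Real.rpow_le_one_of_one_le_of_nonpos hb hw.le
    nlinarith
  have hu1 : ‖u 1 * v 1‖ = 1 / (2 * π * |z|) := by
    rw [norm_mul, hnu 1 one_pos, hnv, Real.one_rpow, one_mul]
  -- integral bound
  set c : ℝ := (2 * π * |x| + ‖w‖) / (2 * π * |z|) with hc
  have h0notin : (0:ℝ) ∉ Set.uIcc 1 b := fun h => by
    rw [hIcc] at h; exact absurd h.1 (by norm_num)
  have hgint : IntervalIntegrable (fun y : ℝ => c * y ^ (w.re - 1)) volume 1 b :=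
    (intervalIntegral.intervalIntegrable_rpow (Or.inr h0notin)).const_mul c
  have hptwise : ∀ᵐ t ∂(volume.restrict (Set.uIoc (1:ℝ) b)), ‖u' t * v t‖ ≤ c * t ^ (w.re - 1) := by
    refine (ae_restrict_mem measurableSet_uIoc).mono (fun y hy => ?_)
    rw [Set.uIoc_of_le hb] at hy
    have hy1 : 1 < y := hy.1
    have hy0 : (0:ℝ) < y := lt_trans one_pos hy1
    have hEpos : (0:ℝ) < y ^ w.re := Real.rpow_pos_of_pos hy0 _
    have hinv : y⁻¹ ≤ 1 := by rw [inv_le_one_iff₀]; right; linarith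
    have hinv0 : (0:ℝ) < y⁻¹ := by positivity
    have hn1 : ‖Complex.exp (tp * ((x / y : ℝ) : ℂ)) * (tp * ((-(x / y ^ 2) : ℝ) : ℂ)) * EE w y‖
        = 2 * π * (|x| * y⁻¹ * y⁻¹) * y ^ w.re := by
      rw [norm_mul, norm_mul, norm_exp_phase, one_mul, norm_mul, norm_tp, norm_EE hy0,
        Complex.norm_real, Real.norm_eq_abs, abs_neg, abs_div, abs_pow, abs_of_pos hy0]
      rw [pow_two, div_eq_mul_inv, mul_inv]
      ring
    have hn2 : ‖Complex.exp (tp * ((x / y : ℝ) : ℂ)) * (EE w y * (w * (y : ℂ)⁻¹))‖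
        = y ^ w.re * (‖w‖ * y⁻¹) := by
      rw [norm_mul, norm_exp_phase, one_mul, norm_mul, norm_EE hy0, norm_mul, norm_inv,
        Complex.norm_real, Real.norm_eq_abs, abs_of_pos hy0]
    have hubd : ‖u' y‖ ≤ (2 * π * |x| + ‖w‖) * y ^ (w.re - 1) := by
      have hsum : ‖u' y‖ ≤ 2 * π * (|x| * y⁻¹ * y⁻¹) * y ^ w.re + y ^ w.re * (‖w‖ * y⁻¹) := by
        rw [hu'_def]
        refine (norm_add_le _ _).trans ?_
        rw [hn1, hn2]
      have hrw : y ^ (w.re - 1) = y ^ w.re * y⁻¹ := by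
        rw [Real.rpow_sub hy0, Real.rpow_one, div_eq_mul_inv]
      rw [hrw]
      refine hsum.trans ?_
      have hx0 : (0:ℝ) ≤ |x| := abs_nonneg x
      have hw0 : (0:ℝ) ≤ ‖w‖ := norm_nonneg w
      have hkey : 0 ≤ 2 * π * |x| * y ^ w.re * y⁻¹ * (1 - y⁻¹) :=
        mul_nonneg (by positivity) (by linarith)
      nlinarith [hkey]
    calc ‖u' y * v y‖ = ‖u' y‖ * (1 / (2 * π * |z|)) := by rw [norm_mul, hnv]
      _ ≤ ((2 * π * |x| + ‖w‖) * y ^ (w.re - 1)) * (1 / (2 * π * |z|)) :=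
          mul_le_mul_of_nonneg_right hubd hvpos.le
      _ = c * y ^ (w.re - 1) := by rw [hc]; ring
  have hIb : ‖∫ y in (1:ℝ)..b, u' y * v y‖ ≤ |∫ y in (1:ℝ)..b, c * y ^ (w.re - 1)| :=
    intervalIntegral.norm_integral_le_abs_of_norm_le hptwise hgint
  have hIeval : ∫ y in (1:ℝ)..b, c * y ^ (w.re - 1) = c * ((b ^ w.re - 1) / w.re) := by
    rw [intervalIntegral.integral_const_mul, integral_rpow (Or.inr ⟨by intro h; rw [sub_eq_iff_eq_add] at h; norm_num at h; linarith, h0notin⟩)]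
    rw [sub_add_cancel, Real.one_rpow]
  have hcnn : 0 ≤ c := by rw [hc]; positivity
  have hIb2 : |∫ y in (1:ℝ)..b, c * y ^ (w.re - 1)| ≤ c / (-w.re) := by
    rw [hIeval]
    have hbp : (0:ℝ) < b ^ w.re := Real.rpow_pos_of_pos hb0 _
    have hb1 : b ^ w.re ≤ 1 := Real.rpow_le_one_of_one_le_of_nonpos hb hw.le
    rw [abs_mul, abs_of_nonneg hcnn, abs_div, abs_of_neg hw, abs_of_nonpos (by linarith)]
    calc c * (-(b ^ w.re - 1) / -w.re) ≤ c * (1 / -w.re) := by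
          refine mul_le_mul_of_nonneg_left ?_ hcnn
          gcongr
          · linarith
          · linarith
      _ = c / -w.re := by rw [mul_one_div]
  calc ‖u b * v b - u 1 * v 1 - ∫ y in (1:ℝ)..b, u' y * v y‖
      ≤ ‖u b * v b - u 1 * v 1‖ + ‖∫ y in (1:ℝ)..b, u' y * v y‖ := norm_sub_le _ _
    _ ≤ (‖u b * v b‖ + ‖u 1 * v 1‖) + ‖∫ y in (1:ℝ)..b, u' y * v y‖ := by
        have := norm_sub_le (u b * v b) (u 1 * v 1); linarith
    _ ≤ (1 / (2 * π * |z|) + 1 / (2 * π * |z|)) + c / (-w.re) := by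
        have := hIb.trans hIb2; rw [hu1]; linarith
    _ ≤ (2 + (2 * π * |x| + ‖w‖) / (-w.re)) / (2 * π * |z|) := by
        rw [hc]
        have h2πz : (0:ℝ) < 2 * π * |z| := by positivity
        have hσ : w.re ≠ 0 := ne_of_lt hw
        rw [div_div, le_div_iff₀ h2πz, add_mul]
        have h1 : (2 * π * |x| + ‖w‖) / (2 * π * |z| * -w.re) * (2 * π * |z|)
            = (2 * π * |x| + ‖w‖) / -w.re := by
          have hπz : (2 : ℝ) * π * |z| ≠ 0 := ne_of_gt h2πz
          have hσ' : -w.re ≠ 0 := by simpa using hσ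
          field_simp
        have h2 : (1 / (2 * π * |z|) + 1 / (2 * π * |z|)) * (2 * π * |z|) = 2 := by
          field_simp
          norm_num
        rw [h1, h2]

lemma lemB {w : ℂ} (hw2 : -2 < w.re) {a x z : ℝ} (ha0 : 0 < a) (ha1 : a ≤ 1) (hx : x ≠ 0) :
    ‖∫ y in a..(1:ℝ), ph x z y * EE w y‖ ≤
      (2 + (2 * π * |z| + ‖w‖ + 2) / (w.re + 2)) / (2 * π * |x|) := by
  have hπ := Real.pi_pos
  have habsx : (0:ℝ) < |x| := abs_pos.mpr hx
  have hIcc : Set.uIcc a (1:ℝ) = Set.Icc a 1 := Set.uIcc_of_le ha1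
  have hne : ∀ y ∈ Set.uIcc a (1:ℝ), y ≠ 0 := by
    intro y hy; rw [hIcc] at hy; have := hy.1; intro h; rw [h] at this; linarith
  set k : ℂ := tp * ((-x : ℝ) : ℂ) with hk_def
  have hk : k ≠ 0 := by
    refine mul_ne_zero tp_ne ?_
    simp [hx]
  have hnk : ‖k‖ = 2 * π * |x| := by
    rw [hk_def, norm_mul, norm_tp, Complex.norm_real, Real.norm_eq_abs, abs_neg]
  set u : ℝ → ℂ := fun y =>
    Complex.exp (tp * ((y * z : ℝ) : ℂ)) * EE w y * ((y ^ 2 : ℝ) : ℂ) / k with hu_def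
  set u' : ℝ → ℂ := fun y =>
    ((Complex.exp (tp * ((y * z : ℝ) : ℂ)) * (tp * ((z : ℝ) : ℂ)) * EE w y +
        Complex.exp (tp * ((y * z : ℝ) : ℂ)) * (EE w y * (w * (y : ℂ)⁻¹))) * ((y ^ 2 : ℝ) : ℂ) +
      Complex.exp (tp * ((y * z : ℝ) : ℂ)) * EE w y * ((2 * y : ℝ) : ℂ)) / k with hu'_def
  set v : ℝ → ℂ := fun y => Complex.exp (tp * ((x / y : ℝ) : ℂ)) with hv_def
  set v' : ℝ → ℂ := fun y =>
    Complex.exp (tp * ((x / y : ℝ) : ℂ)) * (tp * ((-(x / y ^ 2) : ℝ) : ℂ)) with hv'_def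
  have hsq : ∀ y : ℝ, HasDerivAt (fun t : ℝ => ((t ^ 2 : ℝ) : ℂ)) ((2 * y : ℝ) : ℂ) y := by
    intro y
    have h : HasDerivAt (fun t : ℝ => t ^ 2) (2 * y) y := by
      simpa using hasDerivAt_pow 2 y
    exact h.ofReal_comp
  have hu : ∀ y ∈ Set.uIcc a (1:ℝ), HasDerivAt u (u' y) y := by
    intro y hy
    exact (((hasDerivAt_phz z y).mul (hasDerivAt_EE w (hne y hy))).mul (hsq y)).div_const k
  have hv : ∀ y ∈ Set.uIcc a (1:ℝ), HasDerivAt v (v' y) y := fun y hy =>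
    hasDerivAt_phx x (hne y hy)
  have hu'int : IntervalIntegrable u' volume a 1 := by
    apply ContinuousOn.intervalIntegrable
    apply ContinuousOn.div_const
    refine ContinuousOn.add (ContinuousOn.mul (ContinuousOn.add
      (((cont_phz z).continuousOn.mul continuousOn_const).mul (contOn_EE w hne))
      ((cont_phz z).continuousOn.mul ((contOn_EE w hne).mul
        (continuousOn_const.mul (contOn_inv_c hne))))) ?_)
      (((cont_phz z).continuousOn.mul (contOn_EE w hne)).mul
        (Complex.continuous_ofReal.comp_continuousOn
          (continuousOn_const.mul continuousOn_id)))
    exact Complex.continuous_ofReal.comp_continuousOn (continuousOn_id.pow 2)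
  have hv'int : IntervalIntegrable v' volume a 1 := by
    apply ContinuousOn.intervalIntegrable
    refine (contOn_phx x hne).mul (continuousOn_const.mul
      (Complex.continuous_ofReal.comp_continuousOn ?_))
    exact (continuousOn_const.div (continuousOn_id.pow 2)
      (fun y hy => pow_ne_zero 2 (hne y hy))).neg
  have key : ∫ y in a..(1:ℝ), u y * v' y = u 1 * v 1 - u a * v a - ∫ y in a..(1:ℝ), u' y * v y :=
    intervalIntegral.integral_mul_deriv_eq_deriv_mul hu hv hu'int hv'int
  have hEq : Set.EqOn (fun y => ph x z y * EE w y) (fun y => u y * v' y) (Set.uIcc a (1:ℝ)) := by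
    intro y hy
    have hyc : (y : ℂ) ≠ 0 := by exact_mod_cast hne y hy
    have hxc : (x : ℂ) ≠ 0 := by exact_mod_cast hx
    have htpc : tp ≠ 0 := tp_ne
    simp only [hu_def, hv'_def, ph]
    rw [show tp * ((x / y + y * z : ℝ) : ℂ) = tp * ((x / y : ℝ) : ℂ) + tp * ((y * z : ℝ) : ℂ) by
      push_cast; ring, Complex.exp_add, hk_def]
    push_cast
    field_simp
  rw [intervalIntegral.integral_congr hEq, key]
  -- norms
  have hnv : ∀ y : ℝ, ‖v y‖ = 1 := fun y => norm_exp_phase _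
  have hnu : ∀ y : ℝ, 0 < y → ‖u y‖ = y ^ w.re * y ^ 2 / (2 * π * |x|) := by
    intro y hy
    rw [hu_def]
    simp only
    rw [norm_div, norm_mul, norm_mul, norm_exp_phase, one_mul, norm_EE hy, hnk,
      Complex.norm_real, Real.norm_eq_abs, abs_pow, abs_of_pos hy]
  have hw2' : (0:ℝ) ≤ w.re + 2 := by linarith
  have hbdry : ∀ y : ℝ, 0 < y → y ≤ 1 → ‖u y * v y‖ ≤ 1 / (2 * π * |x|) := by
    intro y hy hy1
    rw [norm_mul, hnv, mul_one, hnu y hy]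
    have h1 : y ^ w.re * y ^ 2 ≤ 1 := by
      have h2 : y ^ (2:ℝ) = y ^ (2:ℕ) := by
        rw [← Real.rpow_natCast y 2]; norm_num
      have : y ^ w.re * y ^ 2 = y ^ (w.re + 2) := by
        rw [Real.rpow_add hy, h2]
      rw [this]
      exact Real.rpow_le_one hy.le hy1 hw2'
    have hd : (0:ℝ) < 2 * π * |x| := by positivity
    rw [div_le_div_iff₀ hd hd]
    nlinarith
  -- integral bound
  set c : ℝ := (2 * π * |z| + ‖w‖ + 2) / (2 * π * |x|) with hc
  have hcnn : 0 ≤ c := by rw [hc]; positivity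
  have hgint : IntervalIntegrable (fun y : ℝ => c * y ^ (w.re + 1)) volume a 1 :=
    (intervalIntegral.intervalIntegrable_rpow' (by linarith : (-1:ℝ) < w.re + 1)).const_mul c
  have hptwise : ∀ᵐ t ∂(volume.restrict (Set.uIoc a (1:ℝ))), ‖u' t * v t‖ ≤ c * t ^ (w.re + 1) := by
    refine (ae_restrict_mem measurableSet_uIoc).mono (fun y hy => ?_)
    rw [Set.uIoc_of_le ha1] at hy
    have hy0 : (0:ℝ) < y := lt_trans ha0 hy.1
    have hy1 : y ≤ 1 := hy.2
    have hA : (0:ℝ) < y ^ (w.re + 1) := Real.rpow_pos_of_pos hy0 _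
    have hBA : y ^ (w.re + 2) ≤ y ^ (w.re + 1) :=
      Real.rpow_le_rpow_of_exponent_ge hy0 hy1 (by linarith)
    have e1 : y ^ w.re * y = y ^ (w.re + 1) := by
      rw [Real.rpow_add_one (ne_of_gt hy0)]
    have e2 : y ^ w.re * y ^ 2 = y ^ (w.re + 2) := by
      have h2 : y ^ (2:ℝ) = y ^ (2:ℕ) := by
        rw [← Real.rpow_natCast y 2]; norm_num
      rw [Real.rpow_add hy0, h2]
    have hn1 : ‖Complex.exp (tp * ((y * z : ℝ) : ℂ)) * (tp * ((z : ℝ) : ℂ)) * EE w y‖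
        = 2 * π * |z| * y ^ w.re := by
      rw [norm_mul, norm_mul, norm_exp_phase, one_mul, norm_mul, norm_tp, norm_EE hy0,
        Complex.norm_real, Real.norm_eq_abs]
    have hn2 : ‖Complex.exp (tp * ((y * z : ℝ) : ℂ)) * (EE w y * (w * (y : ℂ)⁻¹))‖
        = y ^ w.re * (‖w‖ * y⁻¹) := by
      rw [norm_mul, norm_exp_phase, one_mul, norm_mul, norm_EE hy0, norm_mul, norm_inv,
        Complex.norm_real, Real.norm_eq_abs, abs_of_pos hy0]
    have hn3 : ‖Complex.exp (tp * ((y * z : ℝ) : ℂ)) * EE w y * ((2 * y : ℝ) : ℂ)‖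
        = y ^ w.re * (2 * y) := by
      rw [norm_mul, norm_mul, norm_exp_phase, one_mul, norm_EE hy0, Complex.norm_real,
        Real.norm_eq_abs, abs_of_pos (by linarith : (0:ℝ) < 2 * y)]
    have hnum : ‖(Complex.exp (tp * ((y * z : ℝ) : ℂ)) * (tp * ((z : ℝ) : ℂ)) * EE w y +
        Complex.exp (tp * ((y * z : ℝ) : ℂ)) * (EE w y * (w * (y : ℂ)⁻¹))) * ((y ^ 2 : ℝ) : ℂ) +
        Complex.exp (tp * ((y * z : ℝ) : ℂ)) * EE w y * ((2 * y : ℝ) : ℂ)‖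
        ≤ (2 * π * |z| + ‖w‖ + 2) * y ^ (w.re + 1) := by
      refine (norm_add_le _ _).trans ?_
      rw [norm_mul, hn3]
      have h4 : ‖Complex.exp (tp * ((y * z : ℝ) : ℂ)) * (tp * ((z : ℝ) : ℂ)) * EE w y +
          Complex.exp (tp * ((y * z : ℝ) : ℂ)) * (EE w y * (w * (y : ℂ)⁻¹))‖
          ≤ 2 * π * |z| * y ^ w.re + y ^ w.re * (‖w‖ * y⁻¹) := by
        refine (norm_add_le _ _).trans ?_
        rw [hn1, hn2]
      have h5 : ‖((y ^ 2 : ℝ) : ℂ)‖ = y ^ 2 := by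
        rw [Complex.norm_real, Real.norm_eq_abs, abs_pow, abs_of_pos hy0]
      have h6 : y ^ w.re * (‖w‖ * y⁻¹) * y ^ 2 = ‖w‖ * y ^ (w.re + 1) := by
        rw [← e1]
        field_simp
      have h7 : 2 * π * |z| * y ^ w.re * y ^ 2 = 2 * π * |z| * y ^ (w.re + 2) := by
        rw [← e2]; ring
      have h8 : y ^ w.re * (2 * y) = 2 * y ^ (w.re + 1) := by
        rw [← e1]; ring
      calc ‖Complex.exp (tp * ((y * z : ℝ) : ℂ)) * (tp * ((z : ℝ) : ℂ)) * EE w y +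
            Complex.exp (tp * ((y * z : ℝ) : ℂ)) * (EE w y * (w * (y : ℂ)⁻¹))‖ *
            ‖((y ^ 2 : ℝ) : ℂ)‖ + y ^ w.re * (2 * y)
          ≤ (2 * π * |z| * y ^ w.re + y ^ w.re * (‖w‖ * y⁻¹)) * y ^ 2 + y ^ w.re * (2 * y) := by
            rw [h5]
            have := mul_le_mul_of_nonneg_right h4 (sq_nonneg y)
            linarith
        _ = 2 * π * |z| * y ^ (w.re + 2) + ‖w‖ * y ^ (w.re + 1) + 2 * y ^ (w.re + 1) := by
            linear_combination h7 + h6 + h8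
        _ ≤ (2 * π * |z| + ‖w‖ + 2) * y ^ (w.re + 1) := by
            nlinarith [mul_le_mul_of_nonneg_left hBA (by positivity : (0:ℝ) ≤ 2 * π * |z|)]
    calc ‖u' y * v y‖ = ‖(Complex.exp (tp * ((y * z : ℝ) : ℂ)) * (tp * ((z : ℝ) : ℂ)) * EE w y +
            Complex.exp (tp * ((y * z : ℝ) : ℂ)) * (EE w y * (w * (y : ℂ)⁻¹))) * ((y ^ 2 : ℝ) : ℂ) +
            Complex.exp (tp * ((y * z : ℝ) : ℂ)) * EE w y * ((2 * y : ℝ) : ℂ)‖ / (2 * π * |x|) := by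
          rw [norm_mul, hnv, mul_one, hu'_def]
          simp only
          rw [norm_div, hnk]
      _ ≤ ((2 * π * |z| + ‖w‖ + 2) * y ^ (w.re + 1)) / (2 * π * |x|) := by gcongr
      _ = c * y ^ (w.re + 1) := by rw [hc]; ring
  have hIb : ‖∫ y in a..(1:ℝ), u' y * v y‖ ≤ |∫ y in a..(1:ℝ), c * y ^ (w.re + 1)| :=
    intervalIntegral.norm_integral_le_abs_of_norm_le hptwise hgint
  have hIeval : ∫ y in a..(1:ℝ), c * y ^ (w.re + 1)
      = c * ((1 - a ^ (w.re + 1 + 1)) / (w.re + 1 + 1)) := by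
    rw [intervalIntegral.integral_const_mul, integral_rpow (Or.inl (by linarith))]
    rw [Real.one_rpow]
  have hIb2 : |∫ y in a..(1:ℝ), c * y ^ (w.re + 1)| ≤ c / (w.re + 2) := by
    have e : w.re + 1 + 1 = w.re + 2 := by ring
    rw [hIeval, e]
    have hap : (0:ℝ) < a ^ (w.re + 2) := Real.rpow_pos_of_pos ha0 _
    have ha1' : a ^ (w.re + 2) ≤ 1 := Real.rpow_le_one ha0.le ha1 (by linarith)
    rw [abs_mul, abs_of_nonneg hcnn, abs_div, abs_of_nonneg (by linarith),
      abs_of_nonneg (by linarith)]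
    calc c * ((1 - a ^ (w.re + 2)) / (w.re + 2)) ≤ c * (1 / (w.re + 2)) := by
          refine mul_le_mul_of_nonneg_left ?_ hcnn
          gcongr <;> linarith
      _ = c / (w.re + 2) := by rw [mul_one_div]
  have hd : (0:ℝ) < 2 * π * |x| := by positivity
  calc ‖u 1 * v 1 - u a * v a - ∫ y in a..(1:ℝ), u' y * v y‖
      ≤ ‖u 1 * v 1 - u a * v a‖ + ‖∫ y in a..(1:ℝ), u' y * v y‖ := norm_sub_le _ _
    _ ≤ (‖u 1 * v 1‖ + ‖u a * v a‖) + ‖∫ y in a..(1:ℝ), u' y * v y‖ := by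
        have := norm_sub_le (u 1 * v 1) (u a * v a); linarith
    _ ≤ (1 / (2 * π * |x|) + 1 / (2 * π * |x|)) + c / (w.re + 2) := by
        have h1 := hbdry 1 one_pos le_rfl
        have h2 := hbdry a ha0 ha1
        have h3 := hIb.trans hIb2
        linarith
    _ ≤ (2 + (2 * π * |z| + ‖w‖ + 2) / (w.re + 2)) / (2 * π * |x|) := by
        rw [hc]
        have hwne : w.re + 2 ≠ 0 := by linarith
        rw [div_div, le_div_iff₀ hd, add_mul]
        have h1 : (2 * π * |z| + ‖w‖ + 2) / (2 * π * |x| * (w.re + 2)) * (2 * π * |x|)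
            = (2 * π * |z| + ‖w‖ + 2) / (w.re + 2) := by
          have hπx : (2:ℝ) * π * |x| ≠ 0 := ne_of_gt hd
          field_simp
        have h2 : (1 / (2 * π * |x|) + 1 / (2 * π * |x|)) * (2 * π * |x|) = 2 := by
          field_simp
          norm_num
        rw [h1, h2]

lemma lemJ {w : ℂ} (hw2 : -2 < w.re) (hw0 : w.re < 0) {C x z : ℝ} (hC : 2 ≤ C)
    (hx : x ≠ 0) (hz : z ≠ 0) :
    ‖∫ y in C⁻¹..C, ph x z y * EE w y‖ ≤
      (2 + (2 * π * |z| + ‖w‖ + 2) / (w.re + 2)) / (2 * π * |x|) +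
      (2 + (2 * π * |x| + ‖w‖) / (-w.re)) / (2 * π * |z|) := by
  have hC0 : (0:ℝ) < C := by linarith
  have h1C : (1:ℝ) ≤ C := by linarith
  have hCi : (0:ℝ) < C⁻¹ := by positivity
  have hCi1 : C⁻¹ ≤ 1 := by
    rw [inv_le_one_iff₀]; right; linarith
  have hne1 : ∀ y ∈ Set.uIcc C⁻¹ (1:ℝ), y ≠ 0 := by
    intro y hy; rw [Set.uIcc_of_le hCi1] at hy
    have := hy.1; intro h; rw [h] at this; linarith
  have hne2 : ∀ y ∈ Set.uIcc (1:ℝ) C, y ≠ 0 := by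
    intro y hy; rw [Set.uIcc_of_le h1C] at hy
    have := hy.1; intro h; rw [h] at this; linarith
  have hint1 : IntervalIntegrable (fun y => ph x z y * EE w y) volume C⁻¹ 1 :=
    ((contOn_ph x z hne1).mul (contOn_EE w hne1)).intervalIntegrable
  have hint2 : IntervalIntegrable (fun y => ph x z y * EE w y) volume 1 C :=
    ((contOn_ph x z hne2).mul (contOn_EE w hne2)).intervalIntegrable
  rw [← intervalIntegral.integral_add_adjacent_intervals hint1 hint2]
  exact (norm_add_le _ _).trans (add_le_add (lemB hw2 hCi hCi1 hx) (lemA hw0 h1C hz))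

lemma set_eq {C : ℝ} (hC : 2 ≤ C) :
    {y : ℝ | C⁻¹ ≤ |y| ∧ |y| ≤ C} = Set.Icc (-C) (-C⁻¹) ∪ Set.Icc C⁻¹ C := by
  have hCi : (0:ℝ) < C⁻¹ := by positivity
  ext y
  simp only [Set.mem_setOf_eq, Set.mem_union, Set.mem_Icc]
  rcases le_or_gt 0 y with h | h
  · rw [abs_of_nonneg h]
    constructor
    · rintro ⟨h1, h2⟩; right; exact ⟨h1, h2⟩
    · rintro (⟨h1, h2⟩ | ⟨h1, h2⟩) <;> constructor <;> linarith
  · rw [abs_of_neg h]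
    constructor
    · rintro ⟨h1, h2⟩; left; constructor <;> linarith
    · rintro (⟨h1, h2⟩ | ⟨h1, h2⟩) <;> constructor <;> linarith

lemma exp_inv_of_pos {y : ℝ} (hy : 0 < y) :
    ((y⁻¹ : ℝ) : ℂ) = Complex.exp (-((Real.log y : ℝ) : ℂ)) := by
  have h : Real.exp (-Real.log y) = y⁻¹ := by rw [Real.exp_neg, Real.exp_log hy]
  rw [← h, Complex.ofReal_exp, Complex.ofReal_neg]

lemma integrand_pos (ε₁ ε₂ : ℕ) (s₁ s₂ : ℂ) (x z : ℝ) {y : ℝ} (hy : 0 < y) :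
    Complex.exp (2 * (π : ℂ) * Complex.I * ((x / y + y * z : ℝ) : ℂ)) *
      (muR ε₁ s₁ y * (muR ε₂ s₂ y)⁻¹) * ((|y|⁻¹ : ℝ) : ℂ)
    = ph x z y * EE (s₁ - s₂ - 1) y := by
  have h1 : Real.sign y = 1 := Real.sign_of_pos hy
  rw [muR, muR, h1, abs_of_pos hy, ph, tp, EE, exp_inv_of_pos hy]
  simp only [Complex.ofReal_one, one_pow, one_mul]
  rw [mul_assoc, ← Complex.exp_neg, ← Complex.exp_add, ← Complex.exp_add]
  congr 1
  ring

lemma integrand_neg (ε₁ ε₂ : ℕ) (s₁ s₂ : ℂ) (x z : ℝ) {y : ℝ} (hy : y < 0) :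
    Complex.exp (2 * (π : ℂ) * Complex.I * ((x / y + y * z : ℝ) : ℂ)) *
      (muR ε₁ s₁ y * (muR ε₂ s₂ y)⁻¹) * ((|y|⁻¹ : ℝ) : ℂ)
    = ((-1 : ℂ) ^ ε₁ * ((-1 : ℂ) ^ ε₂)⁻¹) * (ph (-x) (-z) (-y) * EE (s₁ - s₂ - 1) (-y)) := by
  have h1 : Real.sign y = -1 := Real.sign_of_neg hy
  have hy0 : (0:ℝ) < -y := by linarith
  have harg : (-x / -y + -y * -z : ℝ) = (x / y + y * z : ℝ) := by ring
  rw [muR, muR, h1, abs_of_neg hy, ph, tp, EE, harg, exp_inv_of_pos hy0]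
  simp only [Complex.ofReal_neg, Complex.ofReal_one]
  have hE : Complex.exp ((s₁ - s₂ - 1) * ((Real.log (-y) : ℝ) : ℂ))
      = Complex.exp (s₁ * ((Real.log (-y) : ℝ) : ℂ)) *
          Complex.exp (-(s₂ * ((Real.log (-y) : ℝ) : ℂ))) *
          Complex.exp (-((Real.log (-y) : ℝ) : ℂ)) := by
    rw [← Complex.exp_add, ← Complex.exp_add]; congr 1; ring
  rw [mul_inv, ← Complex.exp_neg, hE]
  ring

lemma norm_pref (ε : ℕ) (s : ℂ) {t : ℝ} (ht : t ≠ 0) :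
    ‖(muR ε s t)⁻¹ * ((|t| : ℝ) : ℂ)‖ = |t| ^ (1 - s.re) := by
  have habs : (0:ℝ) < |t| := abs_pos.mpr ht
  have hmu : ‖muR ε s t‖ = |t| ^ s.re := by
    rw [muR, norm_mul, norm_pow, Complex.norm_real, Real.norm_eq_abs]
    have hsgn : |Real.sign t| = 1 := by
      rcases Real.sign_apply_eq_of_ne_zero t ht with h | h <;> rw [h] <;> norm_num
    rw [hsgn, one_pow, one_mul]
    exact norm_EE habs
  rw [norm_mul, norm_inv, hmu, Complex.norm_real, Real.norm_eq_abs, abs_abs]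
  have h2 : (|t| ^ s.re)⁻¹ * |t| = |t| ^ (-s.re) * |t| ^ (1:ℝ) := by
    rw [Real.rpow_neg habs.le, Real.rpow_one]
  rw [h2, ← Real.rpow_add habs, show -s.re + 1 = 1 - s.re by ring]

end KernelAux

set_option maxHeartbeats 1000000 in
/-- **Uniform bound for the truncated GL(2) Voronoi–Hankel kernel, real case.** -/
theorem kernel_bound_real
    (ε₁ ε₂ : ℕ) (hε₁ : ε₁ ≤ 1) (hε₂ : ε₂ ≤ 1) (s₁ s₂ : ℂ)
    (ϑ : ℝ) (hϑ₀ : 0 ≤ ϑ) (hϑ : ϑ < 1 / 2)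
    (hsum : s₁.re + s₂.re = 0) (hmax : max |s₁.re| |s₂.re| ≤ ϑ) :
    ∃ A : ℝ, 0 < A ∧ ∀ C : ℝ, 2 ≤ C → ∀ x z : ℝ, x ≠ 0 → z ≠ 0 →
      ‖KcR ε₁ ε₂ s₁ s₂ C x z‖ ≤
        A * |z| ^ (1 - s₂.re) * |x| ^ (1 - s₁.re) *
          ((1 + |x|) / |z| + (1 + |z|) / |x|) := by
  classical
  have hπ := Real.pi_pos
  set w : ℂ := s₁ - s₂ - 1 with hw_def
  have hre : w.re = s₁.re - s₂.re - 1 := by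
    rw [hw_def]; simp [Complex.sub_re, Complex.one_re]
  have h1 := abs_le.mp ((le_max_left |s₁.re| |s₂.re|).trans hmax)
  have h2 := abs_le.mp ((le_max_right |s₁.re| |s₂.re|).trans hmax)
  have hw0 : w.re < 0 := by rw [hre]; linarith
  have hw2 : -2 < w.re := by rw [hre]; linarith
  have hwpos : (0:ℝ) < -w.re := by linarith
  have hw2pos : (0:ℝ) < w.re + 2 := by linarith
  set KA : ℝ := (2 + (2 * π + ‖w‖) / (-w.re)) / (2 * π) with hKA
  set KB : ℝ := (2 + (2 * π + ‖w‖ + 2) / (w.re + 2)) / (2 * π) with hKB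
  have hKAnn : 0 ≤ KA := by
    rw [hKA]
    apply div_nonneg _ (by positivity)
    have : 0 ≤ (2 * π + ‖w‖) / (-w.re) := div_nonneg (by positivity) hwpos.le
    linarith
  have hKBnn : 0 ≤ KB := by
    rw [hKB]
    apply div_nonneg _ (by positivity)
    have : 0 ≤ (2 * π + ‖w‖ + 2) / (w.re + 2) := div_nonneg (by positivity) hw2pos.le
    linarith
  refine ⟨2 * (KA + KB) + 1, by linarith, ?_⟩
  intro C hC x z hx hz
  have hC0 : (0:ℝ) < C := by linarith
  have hCi : (0:ℝ) < C⁻¹ := by positivity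
  have hCi1 : C⁻¹ ≤ 1 := by rw [inv_le_one_iff₀]; right; linarith
  have habsx : (0:ℝ) < |x| := abs_pos.mpr hx
  have habsz : (0:ℝ) < |z| := abs_pos.mpr hz
  set f : ℝ → ℂ := fun y =>
    Complex.exp (2 * (π : ℂ) * Complex.I * ((x / y + y * z : ℝ) : ℂ)) *
      (muR ε₁ s₁ y * (muR ε₂ s₂ y)⁻¹) * ((|y|⁻¹ : ℝ) : ℂ) with hf_def
  set cst : ℂ := (-1 : ℂ) ^ ε₁ * ((-1 : ℂ) ^ ε₂)⁻¹ with hcst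
  have hcst1 : ‖cst‖ = 1 := by
    rw [hcst, norm_mul, norm_inv, norm_pow, norm_pow, norm_neg, norm_one]
    norm_num
  have hnepos : ∀ y ∈ Set.Icc C⁻¹ C, y ≠ 0 := by
    intro y hy; have := hy.1; intro h; rw [h] at this; linarith
  have hEqPos : Set.EqOn f (fun y => KernelAux.ph x z y * KernelAux.EE w y) (Set.Icc C⁻¹ C) :=
    fun y hy => KernelAux.integrand_pos ε₁ ε₂ s₁ s₂ x z (lt_of_lt_of_le hCi hy.1)
  have hneneg : ∀ y ∈ Set.Icc (-C) (-C⁻¹), y ≠ 0 := by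
    intro y hy; have := hy.2; intro h; rw [h] at this; linarith
  have hEqNeg : Set.EqOn f
      (fun y => cst * (KernelAux.ph (-x) (-z) (-y) * KernelAux.EE w (-y)))
      (Set.Icc (-C) (-C⁻¹)) := by
    intro y hy
    have hyneg : y < 0 := lt_of_le_of_lt hy.2 (by linarith)
    exact KernelAux.integrand_neg ε₁ ε₂ s₁ s₂ x z hyneg
  have hcontPos : ContinuousOn (fun y => KernelAux.ph x z y * KernelAux.EE w y)
      (Set.Icc C⁻¹ C) :=
    (KernelAux.contOn_ph x z hnepos).mul (KernelAux.contOn_EE w hnepos)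
  have hcontNeg : ContinuousOn
      (fun y => cst * (KernelAux.ph (-x) (-z) (-y) * KernelAux.EE w (-y)))
      (Set.Icc (-C) (-C⁻¹)) := by
    apply continuousOn_const.mul
    have hg : ContinuousOn (fun u => KernelAux.ph (-x) (-z) u * KernelAux.EE w u)
        {u : ℝ | u ≠ 0} :=
      (KernelAux.contOn_ph (-x) (-z) (fun u hu => hu)).mul
        (KernelAux.contOn_EE w (fun u hu => hu))
    exact hg.comp continuous_neg.continuousOn
      (fun y hy => by simpa using neg_ne_zero.mpr (hneneg y hy))
  have hIntPos : IntegrableOn f (Set.Icc C⁻¹ C) volume :=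
    (hcontPos.integrableOn_Icc).congr_fun hEqPos.symm measurableSet_Icc
  have hIntNeg : IntegrableOn f (Set.Icc (-C) (-C⁻¹)) volume :=
    (hcontNeg.integrableOn_Icc).congr_fun hEqNeg.symm measurableSet_Icc
  have hdisj : Disjoint (Set.Icc (-C) (-C⁻¹)) (Set.Icc C⁻¹ C) := by
    rw [Set.disjoint_left]
    rintro y ⟨_, h2⟩ ⟨h3, _⟩
    linarith
  have hsplit : ∫ y in {y : ℝ | C⁻¹ ≤ |y| ∧ |y| ≤ C}, f y
      = (∫ y in Set.Icc (-C) (-C⁻¹), f y) + ∫ y in Set.Icc C⁻¹ C, f y := by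
    rw [KernelAux.set_eq hC]
    exact setIntegral_union hdisj measurableSet_Icc hIntNeg hIntPos
  have hle1 : C⁻¹ ≤ C := hCi1.trans (by linarith)
  have hPosEq : ∫ y in Set.Icc C⁻¹ C, f y
      = ∫ y in C⁻¹..C, KernelAux.ph x z y * KernelAux.EE w y := by
    rw [setIntegral_congr_fun measurableSet_Icc hEqPos, integral_Icc_eq_integral_Ioc,
      ← intervalIntegral.integral_of_le hle1]
  have hNegEq : ∫ y in Set.Icc (-C) (-C⁻¹), f y
      = cst * ∫ y in C⁻¹..C, KernelAux.ph (-x) (-z) y * KernelAux.EE w y := by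
    rw [setIntegral_congr_fun measurableSet_Icc hEqNeg, integral_Icc_eq_integral_Ioc,
      ← intervalIntegral.integral_of_le (neg_le_neg hle1), intervalIntegral.integral_const_mul]
    congr 1
    have h := intervalIntegral.integral_comp_neg (a := -C) (b := -C⁻¹)
      (f := fun u => KernelAux.ph (-x) (-z) u * KernelAux.EE w u)
    simpa using h
  set TA : ℝ := (2 + (2 * π * |x| + ‖w‖) / (-w.re)) / (2 * π * |z|) with hTA
  set TB : ℝ := (2 + (2 * π * |z| + ‖w‖ + 2) / (w.re + 2)) / (2 * π * |x|) with hTB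
  have hJ1 := KernelAux.lemJ hw2 hw0 hC hx hz
  have hJ2 := KernelAux.lemJ hw2 hw0 hC (neg_ne_zero.mpr hx) (neg_ne_zero.mpr hz)
  rw [abs_neg, abs_neg] at hJ2
  have hInorm : ‖∫ y in {y : ℝ | C⁻¹ ≤ |y| ∧ |y| ≤ C}, f y‖ ≤ 2 * (TB + TA) := by
    rw [hsplit]
    refine (norm_add_le _ _).trans ?_
    rw [hNegEq, hPosEq, norm_mul, hcst1, one_mul]
    rw [hTA, hTB]
    linarith
  have hKc : ‖KcR ε₁ ε₂ s₁ s₂ C x z‖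
      = |z| ^ (1 - s₂.re) * |x| ^ (1 - s₁.re) * ‖∫ y in {y : ℝ | C⁻¹ ≤ |y| ∧ |y| ≤ C}, f y‖ := by
    rw [show KcR ε₁ ε₂ s₁ s₂ C x z
        = (muR ε₂ s₂ z)⁻¹ * ((|z| : ℝ) : ℂ) * ((muR ε₁ s₁ x)⁻¹ * ((|x| : ℝ) : ℂ)) *
          ∫ y in {y : ℝ | C⁻¹ ≤ |y| ∧ |y| ≤ C}, f y from rfl]
    rw [norm_mul, norm_mul, KernelAux.norm_pref ε₂ s₂ hz, KernelAux.norm_pref ε₁ s₁ hx]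
  have ht1 : (0:ℝ) ≤ (1 + |x|) / |z| := by positivity
  have ht2 : (0:ℝ) ≤ (1 + |z|) / |x| := by positivity
  have hS1 : TA ≤ KA * ((1 + |x|) / |z|) := by
    have hnum : 2 + (2 * π * |x| + ‖w‖) / (-w.re)
        ≤ (2 + (2 * π + ‖w‖) / (-w.re)) * (1 + |x|) := by
      rw [add_mul, div_mul_eq_mul_div]
      have hq : (2 * π * |x| + ‖w‖) / (-w.re) ≤ (2 * π + ‖w‖) * (1 + |x|) / (-w.re) := by
        gcongr
        nlinarith [abs_nonneg x, norm_nonneg w]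
      nlinarith [abs_nonneg x]
    calc TA = (2 + (2 * π * |x| + ‖w‖) / (-w.re)) / (2 * π * |z|) := hTA
      _ ≤ ((2 + (2 * π + ‖w‖) / (-w.re)) * (1 + |x|)) / (2 * π * |z|) := by gcongr
      _ = KA * ((1 + |x|) / |z|) := by rw [hKA]; ring
  have hS2 : TB ≤ KB * ((1 + |z|) / |x|) := by
    have hnum : 2 + (2 * π * |z| + ‖w‖ + 2) / (w.re + 2)
        ≤ (2 + (2 * π + ‖w‖ + 2) / (w.re + 2)) * (1 + |z|) := by
      rw [add_mul, div_mul_eq_mul_div]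
      have hq : (2 * π * |z| + ‖w‖ + 2) / (w.re + 2)
          ≤ (2 * π + ‖w‖ + 2) * (1 + |z|) / (w.re + 2) := by
        gcongr
        nlinarith [abs_nonneg z, norm_nonneg w]
      nlinarith [abs_nonneg z]
    calc TB = (2 + (2 * π * |z| + ‖w‖ + 2) / (w.re + 2)) / (2 * π * |x|) := hTB
      _ ≤ ((2 + (2 * π + ‖w‖ + 2) / (w.re + 2)) * (1 + |z|)) / (2 * π * |x|) := by gcongr
      _ = KB * ((1 + |z|) / |x|) := by rw [hKB]; ring
  have hfinal : 2 * (TB + TA) ≤ (2 * (KA + KB) + 1) * ((1 + |x|) / |z| + (1 + |z|) / |x|) := by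
    nlinarith [mul_nonneg hKAnn ht2, mul_nonneg hKBnn ht1, mul_nonneg hKAnn ht1,
      mul_nonneg hKBnn ht2]
  rw [hKc]
  calc |z| ^ (1 - s₂.re) * |x| ^ (1 - s₁.re) * ‖∫ y in {y : ℝ | C⁻¹ ≤ |y| ∧ |y| ≤ C}, f y‖
      ≤ |z| ^ (1 - s₂.re) * |x| ^ (1 - s₁.re) *
        ((2 * (KA + KB) + 1) * ((1 + |x|) / |z| + (1 + |z|) / |x|)) :=
        mul_le_mul_of_nonneg_left (hInorm.trans hfinal) (by positivity)
    _ = (2 * (KA + KB) + 1) * |z| ^ (1 - s₂.re) * |x| ^ (1 - s₁.re) *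
        ((1 + |x|) / |z| + (1 + |z|) / |x|) := by ring

end
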